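/- Let n ≥ 2, let κ : [-1,1] → [0,∞) be measurable with ∫_{S^{n-1}} κ(v·v') dv = 1 for each v' ∈ S^{n-1}, and let p be a path-length density with ∫₀^∞ s² p(s) ds = D₀ < ∞. With the scaling θ(ε) = ε², for every fixed ξ ∈ ℝⁿ \ {0} and v' ∈ S^{n-1}, the quantity Λ_ε(ξ,v') = ∫_{S^{n-1}} ∫₀^∞ κ(v'·v) p(s) (cos(ε (v·ξ) s) − 1)/θ(ε) ds dv converges as ε → 0 to −D̃₁ |ξ|², where D̃₁ = (D₀/2) ∫_{S^{n-1}} κ(v·v') (v·e_ξ)² dv and e_ξ = ξ/|ξ|. -/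

import Mathlib

/-!
Since `1 - cos t ≤ t² / 2`, the integrand is bounded, uniformly in `ε`, by
`|κ(v'·v)| (v·ξ)² s² p(s) / 2`, which is integrable on `S^{n-1} × (0,∞)` precisely because `p`
has a finite second moment; pointwise, `(cos (ε c) - 1) / ε² → -c² / 2`. Dominated convergence
on the product and Fubini give the limit `-(D₀ / 2) ∫ κ(v'·v) (v·ξ)² dv`, and
`(v·ξ)² = |ξ|² (v·e_ξ)²`.
-/

open MeasureTheory Metric Filter Set
open scoped ENNReal

noncomputable section

/-- Euclidean space `ℝⁿ`. -/
abbrev Euc (n : ℕ) := EuclideanSpace ℝ (Fin n)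

/-- The unit sphere `S^{n-1}` in `ℝⁿ`. -/
abbrev Sph (n : ℕ) := Metric.sphere (0 : Euc n) 1

/-- The normalized surface measure on the unit sphere (total mass `1`): the surface
measure divided by its total mass. -/
noncomputable def sphμ (n : ℕ) : Measure (Sph n) :=
  ((volume : Measure (Euc n)).toSphere Set.univ)⁻¹ • (volume : Measure (Euc n)).toSphere

/-- A path-length density: measurable, nonnegative, integrating to one on `(0,∞)`, with
finite first moment. -/
def IsPathDensity (p : ℝ → ℝ) : Prop :=
  Measurable p ∧ (∀ s, 0 ≤ p s) ∧ (∫ s in Set.Ioi (0 : ℝ), p s = 1) ∧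
    IntegrableOn (fun s => s * p s) (Set.Ioi (0 : ℝ))

/-- A normalized nonnegative angular kernel `κ` on `[-1,1]`:
`∫_{S^{n-1}} κ(v·v') dv = 1` for every `v'`. -/
def IsAngularKernel (n : ℕ) (κ : ℝ → ℝ) : Prop :=
  Measurable κ ∧ (∀ μ ∈ Set.Icc (-1 : ℝ) 1, 0 ≤ κ μ) ∧
    ∀ v' : Sph n, ∫ v, κ (inner ℝ (v : Euc n) (v' : Euc n)) ∂(sphμ n) = 1

open Topology

lemma abs_cos_mul_sub_one_div_sq_le (ε c : ℝ) :
    |(Real.cos (ε * c) - 1) / ε ^ 2| ≤ c ^ 2 / 2 := by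
  rcases eq_or_ne ε 0 with rfl | hε
  · rw [zero_pow two_ne_zero, div_zero, abs_zero]
    positivity
  have h := Real.one_sub_sq_div_two_le_cos (x := ε * c)
  rw [abs_div, abs_of_nonpos (by linarith [Real.cos_le_one (ε * c)]), abs_of_pos (by positivity),
    div_le_iff₀ (by positivity)]
  linarith

lemma tendsto_cos_mul_sub_one_div_sq (c : ℝ) :
    Tendsto (fun ε => (Real.cos (ε * c) - 1) / ε ^ 2) (𝓝[≠] 0) (𝓝 (-(c ^ 2 / 2))) := by
  rw [tendsto_iff_norm_sub_tendsto_zero]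
  have hsmall : ∀ᶠ ε in 𝓝[≠] (0 : ℝ), |ε * c| ≤ 1 := by
    refine Filter.Eventually.filter_mono nhdsWithin_le_nhds ?_
    have : Tendsto (fun ε : ℝ => |ε * c|) (𝓝 0) (𝓝 0) := by
      simpa using ((continuous_id.mul continuous_const).abs.tendsto (0 : ℝ) : _)
    exact this.eventually (ge_mem_nhds zero_lt_one)
  have hlim : Tendsto (fun ε : ℝ => ε ^ 2 * (c ^ 4 * (5 / 96))) (𝓝[≠] 0) (𝓝 0) := by
    simpa using (((continuous_pow 2).tendsto (0 : ℝ)).mono_left nhdsWithin_le_nhds).mul_const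
      (c ^ 4 * (5 / 96))
  refine squeeze_zero' (Eventually.of_forall fun _ => norm_nonneg _) ?_ hlim
  filter_upwards [hsmall, self_mem_nhdsWithin] with ε hεc hε
  have hε0 : ε ≠ 0 := hε
  have hε2 : 0 < ε ^ 2 := by positivity
  have hdiff : (Real.cos (ε * c) - 1) / ε ^ 2 - -(c ^ 2 / 2)
      = (Real.cos (ε * c) - (1 - (ε * c) ^ 2 / 2)) / ε ^ 2 := by
    field_simp; ring
  rw [Real.norm_eq_abs, hdiff, abs_div, abs_of_pos hε2, div_le_iff₀ hε2]
  calc _ ≤ |ε * c| ^ 4 * (5 / 96) := Real.cos_bound hεc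
    _ = _ := by rw [pow_abs, abs_of_nonneg (by positivity)]; ring

theorem tendsto_integral_integral_mul_cos_sub_one_div_sq {X : Type*} [MeasurableSpace X]
    {μ : Measure X} [SFinite μ] {ν : Measure ℝ} [SFinite ν] {k a : X → ℝ} {q : ℝ → ℝ}
    (hk : AEStronglyMeasurable k μ) (ha : AEStronglyMeasurable a μ)
    (hq : AEStronglyMeasurable q ν) (hka : Integrable (fun x => k x * a x ^ 2) μ)
    (hq2 : Integrable (fun s => s ^ 2 * q s) ν) :
    Tendsto (fun ε => ∫ x, ∫ s, k x * q s * (Real.cos (ε * a x * s) - 1) / ε ^ 2 ∂ν ∂μ)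
      (𝓝[≠] 0) (𝓝 (-((∫ x, k x * a x ^ 2 ∂μ) * (∫ s, s ^ 2 * q s ∂ν) / 2))) := by
  set F : ℝ → X × ℝ → ℝ := fun ε z =>
    k z.1 * q z.2 * ((Real.cos (ε * (a z.1 * z.2)) - 1) / ε ^ 2)
  set G : X × ℝ → ℝ := fun z => ‖k z.1 * a z.1 ^ 2‖ * ‖z.2 ^ 2 * q z.2‖ / 2
  have hF_meas : ∀ ε, AEStronglyMeasurable (F ε) (μ.prod ν) := by
    intro ε
    have hcos : AEMeasurable (fun z : X × ℝ => Real.cos (ε * (a z.1 * z.2))) (μ.prod ν) :=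
      Real.measurable_cos.comp_aemeasurable
        ((ha.aemeasurable.comp_fst.mul measurable_snd.aemeasurable).const_mul ε)
    exact (hk.comp_fst.mul hq.comp_snd).mul
      ((hcos.sub_const 1).div_const _).aestronglyMeasurable
  have hF_le : ∀ ε z, ‖F ε z‖ ≤ G z := by
    intro ε z
    calc ‖F ε z‖ = |k z.1| * |q z.2| * |(Real.cos (ε * (a z.1 * z.2)) - 1) / ε ^ 2| := by
          simp only [F, Real.norm_eq_abs, abs_mul]
      _ ≤ |k z.1| * |q z.2| * ((a z.1 * z.2) ^ 2 / 2) := by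
          gcongr; exact abs_cos_mul_sub_one_div_sq_le _ _
      _ = G z := by
          simp only [G, Real.norm_eq_abs, abs_mul, abs_pow, sq_abs]; ring
  have hG : Integrable G (μ.prod ν) := (hka.norm.mul_prod hq2.norm).div_const 2
  have hF_int : ∀ ε, Integrable (F ε) (μ.prod ν) := fun ε =>
    hG.mono' (hF_meas ε) (Eventually.of_forall (hF_le ε))
  have hF_lim : ∀ z, Tendsto (fun ε => F ε z) (𝓝[≠] 0)
      (𝓝 (-(k z.1 * a z.1 ^ 2 / 2) * (z.2 ^ 2 * q z.2))) := by
    intro z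
    convert (tendsto_cos_mul_sub_one_div_sq (a z.1 * z.2)).const_mul (k z.1 * q z.2) using 2
    ring
  have hDCT := tendsto_integral_filter_of_dominated_convergence G
    (Eventually.of_forall hF_meas) (Eventually.of_forall fun ε => Eventually.of_forall (hF_le ε))
    hG (Eventually.of_forall hF_lim)
  rw [integral_prod_mul (fun x => -(k x * a x ^ 2 / 2)) (fun s => s ^ 2 * q s), integral_neg,
    integral_div] at hDCT
  convert hDCT using 2 with ε
  · rw [integral_prod _ (hF_int ε)]
    simp only [F, mul_assoc, mul_div_assoc]
  · ring

lemma real_inner_inv_norm_smul_sq_mul_norm_sq {E : Type*} [NormedAddCommGroup E]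
    [InnerProductSpace ℝ E] (x ξ : E) :
    inner ℝ x (‖ξ‖⁻¹ • ξ) ^ 2 * ‖ξ‖ ^ 2 = inner ℝ x ξ ^ 2 := by
  rcases eq_or_ne ξ 0 with rfl | hξ
  · simp
  · rw [real_inner_smul_right]
    field_simp

lemma IsAngularKernel.integrable {n : ℕ} {κ : ℝ → ℝ} (hκ : IsAngularKernel n κ) (v' : Sph n) :
    Integrable (fun v : Sph n => κ (inner ℝ (v' : Euc n) (v : Euc n))) (sphμ n) := by
  simp_rw [real_inner_comm _ (v' : Euc n)]
  exact Integrable.of_integral_ne_zero (by rw [hκ.2.2 v']; exact one_ne_zero)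

theorem lambda_limit_finite_second_moment_general
    (n : ℕ)
    (κ : ℝ → ℝ) (hκ : IsAngularKernel n κ)
    (p : ℝ → ℝ) (hp : IsPathDensity p)
    (D₀ : ℝ) (hD₀int : IntegrableOn (fun s => s ^ 2 * p s) (Set.Ioi (0 : ℝ)))
    (hD₀ : ∫ s in Set.Ioi (0 : ℝ), s ^ 2 * p s = D₀)
    (ξ : Euc n) (v' : Sph n) :
    Tendsto
      (fun ε : ℝ => ∫ v : Sph n, ∫ s in Set.Ioi (0 : ℝ),
        κ (inner ℝ (v' : Euc n) (v : Euc n)) * p s *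
          (Real.cos (ε * inner ℝ (v : Euc n) ξ * s) - 1) / ε ^ 2 ∂volume ∂(sphμ n))
      (nhdsWithin 0 (Set.Ioi (0 : ℝ)))
      (nhds (-(D₀ / 2 *
        ∫ v : Sph n, κ (inner ℝ (v : Euc n) (v' : Euc n)) *
          (inner ℝ (v : Euc n) (‖ξ‖⁻¹ • ξ) : ℝ) ^ 2 ∂(sphμ n)) * ‖ξ‖ ^ 2)) := by
  have : SFinite (sphμ n) := by unfold sphμ; infer_instance
  have hinner_sq_le : ∀ v : Sph n, ‖inner ℝ (v : Euc n) ξ ^ 2‖ ≤ ‖ξ‖ ^ 2 := fun v => by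
    rw [norm_pow, Real.norm_eq_abs, ← one_mul ‖ξ‖, ← norm_eq_of_mem_sphere v]
    gcongr
    exact abs_real_inner_le_norm _ _
  have hlim := tendsto_integral_integral_mul_cos_sub_one_div_sq (hκ.integrable v').1
    (continuous_subtype_val.inner continuous_const).aestronglyMeasurable
    hp.1.aestronglyMeasurable
    ((hκ.integrable v').mul_bdd (by fun_prop) (Eventually.of_forall hinner_sq_le)) hD₀int
  have hintegrand :
      (fun v : Sph n => κ (inner ℝ (v' : Euc n) (v : Euc n)) * inner ℝ (v : Euc n) ξ ^ 2)
      = fun v : Sph n => ‖ξ‖ ^ 2 * (κ (inner ℝ (v : Euc n) (v' : Euc n)) *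
          inner ℝ (v : Euc n) (‖ξ‖⁻¹ • ξ) ^ 2) := by
    funext v
    rw [real_inner_comm (v' : Euc n), ← real_inner_inv_norm_smul_sq_mul_norm_sq _ ξ]
    ring
  rw [hD₀, hintegrand, integral_const_mul] at hlim
  convert hlim.mono_left (nhdsGT_le_nhdsNE 0) using 2
  ring

/-- Proposition 4.5 (a2): pointwise limit `Λ_ε → −D̃₁ |ξ|²` when the
path-length density has a finite second moment and `θ(ε) = ε²`. -/
theorem lambda_limit_finite_second_moment
    (n : ℕ) (hn : 2 ≤ n)
    (κ : ℝ → ℝ) (hκ : IsAngularKernel n κ)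
    (p : ℝ → ℝ) (hp : IsPathDensity p)
    (D₀ : ℝ) (hD₀int : IntegrableOn (fun s => s ^ 2 * p s) (Set.Ioi (0 : ℝ)))
    (hD₀ : ∫ s in Set.Ioi (0 : ℝ), s ^ 2 * p s = D₀)
    (ξ : Euc n) (hξ : ξ ≠ 0) (v' : Sph n) :
    Tendsto
      (fun ε : ℝ => ∫ v : Sph n, ∫ s in Set.Ioi (0 : ℝ),
        κ (inner ℝ (v' : Euc n) (v : Euc n)) * p s *
          (Real.cos (ε * inner ℝ (v : Euc n) ξ * s) - 1) / ε ^ 2 ∂volume ∂(sphμ n))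
      (nhdsWithin 0 (Set.Ioi (0 : ℝ)))
      (nhds (-(D₀ / 2 *
        ∫ v : Sph n, κ (inner ℝ (v : Euc n) (v' : Euc n)) *
          (inner ℝ (v : Euc n) (‖ξ‖⁻¹ • ξ) : ℝ) ^ 2 ∂(sphμ n)) * ‖ξ‖ ^ 2)) :=
  lambda_limit_finite_second_moment_general n κ hκ p hp D₀ hD₀int hD₀ ξ v'
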